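/- Fix n ≥ 3 and parameters α₄,…,α_n, θ in ℂ. Let L(α₄,…,α_n,θ) be the Leibniz superalgebra with even basis e₁,…,e_n and odd basis y₁,…,y_{n-1} and multiplication table (1) of the paper. Every even derivation d of L(α₄,…,α_n,θ) satisfies: there exist scalars a₁,…,a_{n-1}, b_n such that d(e₁) = 2a₁e₁ + a₂e₃ + a₃e₄ + ⋯ + a_{n-1}e_n, d(e₂) = 2a₁e₂ + a₂e₃ + ⋯ + a_{n-2}e_{n-1} + b_n e_n, d(e_i) = 2(i-1)a₁ e_i + a₂e_{i+1} + ⋯ + a_{n-i+1}e_n for 3 ≤ i ≤ n, d(y_i) = (2i-1)a₁ y_i + a₂y_{i+1} + ⋯ + a_{n-i}y_{n-1} for 1 ≤ i ≤ n-1; moreover (n-3)θa₁ = 0 and α_i a₁ = 0 for 4 ≤ i ≤ n. -/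

import Mathlib

/-!
Write `d (y 1) = ∑ aₖ yₖ` and `d (e 2) = ∑ tᵢ eᵢ`. Since `e 1 = [y 1, y 1]`, the Leibniz rule gives
`d (e 1) = 2a₁ e 1 + ∑ₖ aₖ e (k + 1)`, whose second part is annihilated by right multiplication
from every `e i` and `y j`. Right multiplication by `e 1` raises indices by one, so induction gives
`d (e i)` for `i ≥ 3` and `d (y j)` for `j ≥ 1`, each step adding `2a₁` to the diagonal coefficient.
Applying `d` to `[e 2, y 1] = ½ y 2` and comparing `y`-coefficients yields `t₂ = 2a₁ - t₁` and
`tᵢ = aᵢ₋₁`. Finally `d [e 2, e 2]` and `d [e 1, e 2]`, compared at `e 3`, force `t₁ = 0`; compared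
at `e i` and at `e n` they give `αᵢ a₁ = 0` and `(n - 3) θ a₁ = 0`.
-/

open Finset

section Sums

variable {M : Type*} [AddCommMonoid M]

lemma sum_Icc_eq_add_sum_Icc_succ (f : ℕ → M) {p q : ℕ} (h : p ≤ q) :
    ∑ k ∈ Icc p q, f k = f p + ∑ k ∈ Icc (p + 1) q, f k := by
  rw [← insert_Icc_add_one_left_eq_Icc h, sum_insert (by simp)]

lemma sum_Icc_eq_sum_Icc_add (f : ℕ → M) {p q : ℕ} (h : p ≤ q) (hq : 0 < q) :
    ∑ k ∈ Icc p q, f k = ∑ k ∈ Icc p (q - 1), f k + f q := by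
  obtain ⟨q, rfl⟩ : ∃ q', q = q' + 1 := ⟨q - 1, by omega⟩
  rw [sum_Icc_succ_top (by omega), Nat.add_sub_cancel]

lemma sum_Icc_add_one (f : ℕ → M) (p q : ℕ) :
    ∑ k ∈ Icc p q, f (k + 1) = ∑ k ∈ Icc (p + 1) (q + 1), f k := by
  rw [← map_add_right_Icc, sum_map]
  rfl

lemma sum_Icc_eq_sum_Icc_of_eq_zero {f : ℕ → M} {p q q' : ℕ} (h : q' ≤ q)
    (hf : ∀ k, q' < k → k ≤ q → f k = 0) :
    ∑ k ∈ Icc p q, f k = ∑ k ∈ Icc p q', f k :=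
  (sum_subset (Icc_subset_Icc_right h) fun k hk hk' => by
    simp only [mem_Icc] at hk hk'
    exact hf k (by omega) hk.2).symm

end Sums

section Coordinates

variable {K V : Type*} [Field K] [AddCommGroup V] [Module K V]

variable (K) in
def HasCoordinateFunctionals (e : ℕ → V) (N : ℕ) : Prop :=
  ∀ j, 1 ≤ j → j ≤ N → ∃ φ : V →ₗ[K] K, ∀ m, φ (e m) = if m = j then 1 else 0

lemma exists_eq_sum_Icc_of_mem_span {N : ℕ} {v : Fin N → V} {y : ℕ → V}
    (hy : ∀ k (h : 1 ≤ k ∧ k ≤ N), y k = v ⟨k - 1, Nat.sub_one_lt_of_le h.1 h.2⟩) {x : V}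
    (hx : x ∈ Submodule.span K (Set.range v)) :
    ∃ c : ℕ → K, x = ∑ k ∈ Icc 1 N, c k • y k := by
  obtain ⟨c, rfl⟩ := (Submodule.mem_span_range_iff_exists_fun K).mp hx
  set c' : ℕ → K := fun k => if h : 1 ≤ k ∧ k ≤ N then c ⟨k - 1, by omega⟩ else 0
  refine ⟨c', ?_⟩
  calc ∑ i, c i • v i = ∑ i : Fin N, c' (i + 1) • y (i + 1) :=
        sum_congr rfl fun i _ => by simp [c', hy]
    _ = ∑ i ∈ range N, c' (i + 1) • y (i + 1) :=
        Fin.sum_univ_eq_sum_range (fun i => c' (i + 1) • y (i + 1)) N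
    _ = ∑ k ∈ Icc 1 N, c' k • y k := by
      rw [range_eq_Ico, sum_Ico_add' (fun k => c' k • y k), zero_add, Ico_add_one_right_eq_Icc]

lemma Module.Basis.hasCoordinateFunctionals {ι : Type*} (b : Module.Basis ι K V) {N : ℕ}
    {g : Fin N → ι} (hg : Function.Injective g) {e : ℕ → V}
    (he : ∀ k (h : 1 ≤ k ∧ k ≤ N), e k = b (g ⟨k - 1, Nat.sub_one_lt_of_le h.1 h.2⟩))
    (he0 : ∀ k, ¬(1 ≤ k ∧ k ≤ N) → e k = 0) : HasCoordinateFunctionals K e N := by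
  classical
  intro j hj1 hj2
  refine ⟨b.coord (g ⟨j - 1, by omega⟩), fun m => ?_⟩
  by_cases hm : 1 ≤ m ∧ m ≤ N
  · rw [he m hm, Module.Basis.coord_apply, Module.Basis.repr_self, Finsupp.single_apply,
      hg.eq_iff, Fin.mk.injEq]
    congr 1
    exact propext (by omega)
  · rw [he0 m hm, map_zero, if_neg (by omega)]

end Coordinates

section LeibnizTable

variable {K V : Type*} [Field K] [AddCommGroup V] [Module K V]

lemma derivation_bracket_of_eq_smul_add {br : V →ₗ[K] V →ₗ[K] V} {d : Module.End K V}
    (hd : ∀ u v, d (br u v) = br (d u) v + br u (d v)) {u w x : V} {c : K}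
    (hu : d u = c • u + w) (hx : br x w = 0) :
    d (br x u) = br (d x) u + c • br x u := by
  rw [hd, hu, map_add, map_smul, hx, add_zero]

/-- Table (1), with the basis families extended by `e k = 0` for `n < k` and `y k = 0` for
`n ≤ k`, so that every row holds without an upper bound on the indices. -/
structure IsLeibnizTable (n : ℕ) (α : ℕ → K) (θ : K) (e y : ℕ → V)
    (br : V →ₗ[K] V →ₗ[K] V) : Prop where
  e_eq_zero : ∀ k, n < k → e k = 0
  y_eq_zero : ∀ k, n ≤ k → y k = 0
  e_one_e_one : br (e 1) (e 1) = e 3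
  e_e_one : ∀ i, 2 ≤ i → br (e i) (e 1) = e (i + 1)
  e_one_e_two : br (e 1) (e 2) = ∑ k ∈ Icc 4 (n - 1), α k • e k + θ • e n
  e_e_two : ∀ i, 2 ≤ i → br (e i) (e 2) = ∑ k ∈ Icc 4 n, α k • e (i + k - 2)
  e_e : ∀ i j, 1 ≤ i → 3 ≤ j → br (e i) (e j) = 0
  y_e_one : ∀ j, 1 ≤ j → br (y j) (e 1) = y (j + 1)
  y_e : ∀ j i, 1 ≤ j → 3 ≤ i → br (y j) (e i) = 0
  e_one_y_one : br (e 1) (y 1) = (1 / 2 : K) • y 2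
  e_y_one : ∀ i, 2 ≤ i → br (e i) (y 1) = (1 / 2 : K) • y i
  e_y : ∀ i j, 1 ≤ i → 2 ≤ j → br (e i) (y j) = 0
  y_one_y_one : br (y 1) (y 1) = e 1
  y_y_one : ∀ j, 2 ≤ j → br (y j) (y 1) = e (j + 1)
  y_y : ∀ j k, 1 ≤ j → 2 ≤ k → br (y j) (y k) = 0

namespace IsLeibnizTable

variable {n : ℕ} {α : ℕ → K} {θ : K} {e y : ℕ → V} {br : V →ₗ[K] V →ₗ[K] V}
  {d : Module.End K V} {a t : ℕ → K}

lemma of_bounded (hn : 2 ≤ n)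
    (heN0 : ∀ k, ¬(1 ≤ k ∧ k ≤ n) → e k = 0)
    (hyN0 : ∀ k, ¬(1 ≤ k ∧ k ≤ n - 1) → y k = 0)
    (hee1 : ∀ i, 1 ≤ i → i ≤ n → br (e i) (e 1) = if i = 1 then e 3 else e (i + 1))
    (hee2a : br (e 1) (e 2) = (∑ k ∈ Icc 4 (n - 1), α k • e k) + θ • e n)
    (hee2b : ∀ i, 2 ≤ i → i ≤ n → br (e i) (e 2) = ∑ k ∈ Icc 4 n, α k • e (i + k - 2))
    (hee0 : ∀ i j, 1 ≤ i → i ≤ n → 3 ≤ j → j ≤ n → br (e i) (e j) = 0)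
    (hye1 : ∀ j, 1 ≤ j → j ≤ n - 1 → br (y j) (e 1) = y (j + 1))
    (hye0 : ∀ j i, 1 ≤ j → j ≤ n - 1 → 3 ≤ i → i ≤ n → br (y j) (e i) = 0)
    (hey1 : ∀ i, 1 ≤ i → i ≤ n →
      br (e i) (y 1) = if i = 1 then (1 / 2 : K) • y 2 else (1 / 2 : K) • y i)
    (hey0 : ∀ i j, 1 ≤ i → i ≤ n → 2 ≤ j → j ≤ n - 1 → br (e i) (y j) = 0)
    (hyy1 : ∀ j, 1 ≤ j → j ≤ n - 1 → br (y j) (y 1) = if j = 1 then e 1 else e (j + 1))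
    (hyy0 : ∀ j k, 1 ≤ j → j ≤ n - 1 → 2 ≤ k → k ≤ n - 1 → br (y j) (y k) = 0) :
    IsLeibnizTable n α θ e y br := by
  have he : ∀ k, n < k → e k = 0 := fun k hk => heN0 k (by omega)
  have hy : ∀ k, n ≤ k → y k = 0 := fun k hk => hyN0 k (by omega)
  refine ⟨he, hy, by simpa using hee1 1 le_rfl (by omega), fun i hi => ?_, hee2a,
    fun i hi => ?_, fun i j hi hj => ?_, fun j hj => ?_, fun j i hj hi => ?_,
    by simpa using hey1 1 le_rfl (by omega), fun i hi => ?_, fun i j hi hj => ?_,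
    by simpa using hyy1 1 le_rfl (by omega), fun j hj => ?_, fun j k hj hk => ?_⟩
  · rcases le_or_gt i n with h | h
    · rw [hee1 i (by omega) h, if_neg (by omega)]
    · simp (disch := omega) [he]
  · rcases le_or_gt i n with h | h
    · exact hee2b i hi h
    · rw [he i h, map_zero, LinearMap.zero_apply]
      exact (sum_eq_zero fun k hk => by rw [he _ (by rw [mem_Icc] at hk; omega), smul_zero]).symm
  · by_cases h : i ≤ n ∧ j ≤ n
    · exact hee0 i j hi h.1 hj h.2
    · rcases not_and_or.1 h with h | h <;> simp (disch := omega) [he]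
  · rcases le_or_gt j (n - 1) with h | h
    · exact hye1 j hj h
    · simp (disch := omega) [hy]
  · by_cases h : j ≤ n - 1 ∧ i ≤ n
    · exact hye0 j i hj h.1 hi h.2
    · rcases not_and_or.1 h with h | h <;> simp (disch := omega) [he, hy]
  · rcases le_or_gt i n with h | h
    · rw [hey1 i (by omega) h, if_neg (by omega)]
    · simp (disch := omega) [he, hy]
  · by_cases h : i ≤ n ∧ j ≤ n - 1
    · exact hey0 i j hi h.1 hj h.2
    · rcases not_and_or.1 h with h | h <;> simp (disch := omega) [he, hy]
  · rcases le_or_gt j (n - 1) with h | h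
    · rw [hyy1 j (by omega) h, if_neg (by omega)]
    · simp (disch := omega) [he, hy]
  · by_cases h : j ≤ n - 1 ∧ k ≤ n - 1
    · exact hyy0 j k hj h.1 hk h.2
    · rcases not_and_or.1 h with h | h <;> simp (disch := omega) [hy]

lemma derivation_e_one (T : IsLeibnizTable n α θ e y br) (hn : 2 ≤ n)
    (hd : ∀ u v, d (br u v) = br (d u) v + br u (d v))
    (hdy : d (y 1) = ∑ k ∈ Icc 1 (n - 1), a k • y k) :
    d (e 1) = (2 * a 1) • e 1 + ∑ k ∈ Icc 2 (n - 1), a k • e (k + 1) := by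
  have hdy' : d (y 1) = a 1 • y 1 + ∑ k ∈ Icc 2 (n - 1), a k • y k := by
    rw [hdy, sum_Icc_eq_add_sum_Icc_succ _ (by omega)]
  have hleft : br (d (y 1)) (y 1) = a 1 • e 1 + ∑ k ∈ Icc 2 (n - 1), a k • e (k + 1) := by
    simp only [hdy', map_add, map_sum, map_smul, LinearMap.add_apply, LinearMap.sum_apply,
      LinearMap.smul_apply, T.y_one_y_one]
    exact congrArg _ (sum_congr rfl fun k hk => by rw [T.y_y_one k (mem_Icc.1 hk).1])
  have hright : br (y 1) (d (y 1)) = a 1 • e 1 := by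
    simp only [hdy', map_add, map_sum, map_smul, T.y_one_y_one]
    rw [sum_eq_zero fun k hk => by rw [T.y_y 1 k le_rfl (mem_Icc.1 hk).1, smul_zero], add_zero]
  have h := hd (y 1) (y 1)
  rw [hleft, hright, T.y_one_y_one] at h
  rw [h]
  module

lemma derivation_bracket_e_one (T : IsLeibnizTable n α θ e y br) (hn : 2 ≤ n)
    (hd : ∀ u v, d (br u v) = br (d u) v + br u (d v))
    (hdy : d (y 1) = ∑ k ∈ Icc 1 (n - 1), a k • y k) {x : V}
    (hx : ∀ k, 3 ≤ k → br x (e k) = 0) :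
    d (br x (e 1)) = br (d x) (e 1) + (2 * a 1) • br x (e 1) :=
  derivation_bracket_of_eq_smul_add hd (T.derivation_e_one hn hd hdy) <| by
    simp only [map_sum, map_smul]
    exact sum_eq_zero fun k hk => by rw [hx _ (by rw [mem_Icc] at hk; omega), smul_zero]

lemma derivation_e (T : IsLeibnizTable n α θ e y br) (hn : 2 ≤ n)
    (hd : ∀ u v, d (br u v) = br (d u) v + br u (d v))
    (hdy : d (y 1) = ∑ k ∈ Icc 1 (n - 1), a k • y k) {i : ℕ} (hi : 3 ≤ i) :
    d (e i) = (2 * ((i : K) - 1) * a 1) • e i + ∑ m ∈ Icc 2 (n - 1), a m • e (i + m - 1) := by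
  induction i, hi using Nat.le_induction with
  | base =>
    rw [← T.e_one_e_one, T.derivation_bracket_e_one hn hd hdy (T.e_e 1 · le_rfl),
      T.derivation_e_one hn hd hdy]
    simp only [map_add, map_sum, map_smul, LinearMap.add_apply, LinearMap.sum_apply,
      LinearMap.smul_apply, T.e_one_e_one]
    rw [sum_congr rfl fun m hm => by
      rw [T.e_e_one _ (by rw [mem_Icc] at hm; omega), show m + 1 + 1 = 3 + m - 1 by omega]]
    push_cast
    module
  | succ i hi ih =>
    rw [← T.e_e_one i (by omega), T.derivation_bracket_e_one hn hd hdy (T.e_e i · (by omega)), ih]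
    simp only [map_add, map_sum, map_smul, LinearMap.add_apply, LinearMap.sum_apply,
      LinearMap.smul_apply, T.e_e_one i (by omega)]
    rw [sum_congr rfl fun m hm => by
      rw [T.e_e_one _ (by rw [mem_Icc] at hm; omega), show i + m - 1 + 1 = i + 1 + m - 1 by omega]]
    push_cast
    module

lemma derivation_y (T : IsLeibnizTable n α θ e y br) (hn : 2 ≤ n)
    (hd : ∀ u v, d (br u v) = br (d u) v + br u (d v))
    (hdy : d (y 1) = ∑ k ∈ Icc 1 (n - 1), a k • y k) {j : ℕ} (hj : 1 ≤ j) :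
    d (y j) = ((2 * (j : K) - 1) * a 1) • y j + ∑ m ∈ Icc 2 (n - 1), a m • y (j + m - 1) := by
  induction j, hj using Nat.le_induction with
  | base =>
    rw [hdy, sum_Icc_eq_add_sum_Icc_succ _ (by omega), Nat.cast_one]
    simp only [Nat.add_sub_cancel_left]
    module
  | succ j hj ih =>
    rw [← T.y_e_one j hj, T.derivation_bracket_e_one hn hd hdy (T.y_e j · hj), ih]
    simp only [map_add, map_sum, map_smul, LinearMap.add_apply, LinearMap.sum_apply,
      LinearMap.smul_apply, T.y_e_one j hj]
    rw [sum_congr rfl fun m hm => by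
      rw [T.y_e_one _ (by rw [mem_Icc] at hm; omega), show j + m - 1 + 1 = j + 1 + m - 1 by omega]]
    push_cast
    module

lemma derivation_y_two [CharZero K] (T : IsLeibnizTable n α θ e y br) (hn : 2 ≤ n)
    (hd : ∀ u v, d (br u v) = br (d u) v + br u (d v))
    (hdy : d (y 1) = ∑ k ∈ Icc 1 (n - 1), a k • y k)
    (hde : d (e 2) = ∑ i ∈ Icc 1 n, t i • e i) :
    d (y 2) = (t 1 + a 1) • y 2 + ∑ i ∈ Icc 2 n, t i • y i := by
  have hleft : br (d (e 2)) (y 1) = (1 / 2 : K) • (t 1 • y 2 + ∑ i ∈ Icc 2 n, t i • y i) := by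
    rw [hde, sum_Icc_eq_add_sum_Icc_succ _ (by omega)]
    simp only [map_add, map_sum, map_smul, LinearMap.add_apply, LinearMap.sum_apply,
      LinearMap.smul_apply, T.e_one_y_one, smul_add, smul_sum]
    congr 1
    · exact smul_comm _ _ _
    · exact sum_congr rfl fun i hi => by rw [T.e_y_one i (mem_Icc.1 hi).1, smul_comm]
  have hright : br (e 2) (d (y 1)) = (1 / 2 : K) • a 1 • y 2 := by
    rw [hdy, sum_Icc_eq_add_sum_Icc_succ _ (by omega)]
    simp only [map_add, map_sum, map_smul, T.e_y_one 2 le_rfl]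
    rw [sum_eq_zero fun k hk => by rw [T.e_y 2 k (by omega) (mem_Icc.1 hk).1, smul_zero],
      add_zero, smul_comm]
  have h := hd (e 2) (y 1)
  rw [T.e_y_one 2 le_rfl, map_smul, hleft, hright] at h
  linear_combination (norm := module) (2 : K) • h

lemma derivation_e_two_coeff [CharZero K] (T : IsLeibnizTable n α θ e y br) (hn : 3 ≤ n)
    (hd : ∀ u v, d (br u v) = br (d u) v + br u (d v))
    (hdy : d (y 1) = ∑ k ∈ Icc 1 (n - 1), a k • y k)
    (hde : d (e 2) = ∑ i ∈ Icc 1 n, t i • e i) (hY : HasCoordinateFunctionals K y (n - 1)) :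
    t 2 = 2 * a 1 - t 1 ∧ ∀ i, 3 ≤ i → i ≤ n - 1 → t i = a (i - 1) := by
  have hshift : ∑ m ∈ Icc 2 (n - 1), a m • y (2 + m - 1) = ∑ k ∈ Icc 3 n, a (k - 1) • y k := by
    have h := sum_Icc_add_one (fun k => a (k - 1) • y k) 2 (n - 1)
    rw [Nat.sub_add_cancel (by omega)] at h
    rw [← h]
    exact sum_congr rfl fun m _ => by rw [Nat.add_sub_cancel, show 2 + m - 1 = m + 1 by omega]
  have hdy2 := T.derivation_y_two (by omega) hd hdy hde
  rw [T.derivation_y (by omega) hd hdy (j := 2) (by norm_num), hshift] at hdy2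
  constructor
  · obtain ⟨ψ, hψ⟩ := hY 2 (by norm_num) (by omega)
    have h : (2 * 2 - 1) * a 1 = t 1 + a 1 + t 2 := by
      simpa [hψ, show 2 ≤ n by omega] using congrArg ψ hdy2
    linear_combination -h
  · intro i hi3 hin
    obtain ⟨ψ, hψ⟩ := hY i (by omega) hin
    have h : a (i - 1) = t i := by
      simpa [hψ, show 2 ≠ i by omega, hi3, show i ≤ n by omega, show 2 ≤ i by omega]
        using congrArg ψ hdy2
    exact h.symm

lemma derivation_e_two [CharZero K] (T : IsLeibnizTable n α θ e y br) (hn : 3 ≤ n)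
    (hd : ∀ u v, d (br u v) = br (d u) v + br u (d v))
    (hdy : d (y 1) = ∑ k ∈ Icc 1 (n - 1), a k • y k)
    (hde : d (e 2) = ∑ i ∈ Icc 1 n, t i • e i) (hY : HasCoordinateFunctionals K y (n - 1)) :
    d (e 2) = t 1 • e 1 + (2 * a 1 - t 1) • e 2 + ∑ k ∈ Icc 2 (n - 2), a k • e (k + 1) +
      t n • e n := by
  obtain ⟨ht2, ht⟩ := T.derivation_e_two_coeff hn hd hdy hde hY
  have htail : ∑ i ∈ Icc 3 (n - 1), t i • e i = ∑ k ∈ Icc 2 (n - 2), a k • e (k + 1) :=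
    calc ∑ i ∈ Icc 3 (n - 1), t i • e i = ∑ i ∈ Icc (2 + 1) (n - 2 + 1), a (i - 1) • e i := by
          rw [show n - 2 + 1 = n - 1 by omega]
          exact sum_congr rfl fun i hi => by rw [ht i (mem_Icc.1 hi).1 (mem_Icc.1 hi).2]
      _ = ∑ k ∈ Icc 2 (n - 2), a k • e (k + 1) := by
          rw [← sum_Icc_add_one]
          simp only [Nat.add_sub_cancel]
  rw [hde, sum_Icc_eq_add_sum_Icc_succ _ (by omega), sum_Icc_eq_add_sum_Icc_succ _ (by omega),
    sum_Icc_eq_sum_Icc_add _ (by omega) (by omega), htail, ht2]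
  abel

lemma sum_smul_e_eq_zero_of_le (T : IsLeibnizTable n α θ e y br) (c : ℕ → K) {i p : ℕ} (hp : 2 ≤ p)
    (hi : n ≤ i) (q : ℕ) : ∑ k ∈ Icc p q, c k • e (i + k - 1) = 0 :=
  sum_eq_zero fun k hk => by rw [T.e_eq_zero _ (by rw [mem_Icc] at hk; omega), smul_zero]

lemma e_n_e_two (T : IsLeibnizTable n α θ e y br) (hn : 2 ≤ n) : br (e n) (e 2) = 0 := by
  rw [T.e_e_two n hn]
  exact sum_eq_zero fun k hk => by rw [T.e_eq_zero _ (by rw [mem_Icc] at hk; omega), smul_zero]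

lemma sum_bracket_e_two (T : IsLeibnizTable n α θ e y br) :
    ∑ k ∈ Icc 2 (n - 1), a k • br (e (k + 1)) (e 2) =
      ∑ j ∈ Icc 4 n, α j • ∑ m ∈ Icc 2 (n - 1), a m • e (j + m - 1) := by
  simp only [smul_sum]
  rw [sum_comm]
  refine sum_congr rfl fun m hm => ?_
  rw [T.e_e_two _ (by rw [mem_Icc] at hm; omega), smul_sum]
  exact sum_congr rfl fun j _ => by rw [smul_comm, show m + 1 + j - 2 = j + m - 1 by omega]

lemma derivation_sum_e (T : IsLeibnizTable n α θ e y br) (hn : 2 ≤ n)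
    (hd : ∀ u v, d (br u v) = br (d u) v + br u (d v))
    (hdy : d (y 1) = ∑ k ∈ Icc 1 (n - 1), a k • y k) {s : Finset ℕ} (hs : ∀ k ∈ s, 3 ≤ k)
    (c : ℕ → K) :
    d (∑ k ∈ s, c k • e k) = ∑ k ∈ s, (2 * ((k : K) - 1) * a 1 * c k) • e k +
      ∑ k ∈ s, c k • ∑ m ∈ Icc 2 (n - 1), a m • e (k + m - 1) := by
  rw [map_sum, ← sum_add_distrib]
  refine sum_congr rfl fun k hk => ?_
  rw [map_smul, T.derivation_e hn hd hdy (hs k hk), smul_add, smul_smul, mul_comm (c k)]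

lemma bracket_derivation_e_two (T : IsLeibnizTable n α θ e y br) (hn : 3 ≤ n)
    (hde : d (e 2) = t 1 • e 1 + (2 * a 1 - t 1) • e 2 + ∑ k ∈ Icc 2 (n - 2), a k • e (k + 1) +
      t n • e n) {i : ℕ} (hi : 1 ≤ i) :
    br (e i) (d (e 2)) = t 1 • br (e i) (e 1) + (2 * a 1 - t 1) • br (e i) (e 2) := by
  simp only [hde, map_add, map_smul, map_sum, T.e_e i n hi hn, smul_zero, add_zero]
  rw [sum_eq_zero fun k hk => by rw [T.e_e i _ hi (by rw [mem_Icc] at hk; omega), smul_zero],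
    add_zero]

lemma bracket_e_two_e_two (T : IsLeibnizTable n α θ e y br) (hn : 3 ≤ n)
    (hd : ∀ u v, d (br u v) = br (d u) v + br u (d v))
    (hdy : d (y 1) = ∑ k ∈ Icc 1 (n - 1), a k • y k)
    (hde : d (e 2) = t 1 • e 1 + (2 * a 1 - t 1) • e 2 + ∑ k ∈ Icc 2 (n - 2), a k • e (k + 1) +
      t n • e n) :
    ∑ k ∈ Icc 4 n, (2 * ((k : K) - 1) * a 1 * α k) • e k =
      t 1 • br (e 1) (e 2) + t 1 • e 3 + (2 * (2 * a 1 - t 1)) • ∑ k ∈ Icc 4 n, α k • e k := by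
  have he22 : br (e 2) (e 2) = ∑ k ∈ Icc 4 n, α k • e k := by
    simp only [T.e_e_two 2 le_rfl, Nat.add_sub_cancel_left]
  have htail : ∑ k ∈ Icc 2 (n - 2), a k • br (e (k + 1)) (e 2) =
      ∑ j ∈ Icc 4 n, α j • ∑ m ∈ Icc 2 (n - 1), a m • e (j + m - 1) := by
    rw [← T.sum_bracket_e_two]
    refine (sum_Icc_eq_sum_Icc_of_eq_zero (by omega) fun k hk hk' => ?_).symm
    rw [show k + 1 = n by omega, T.e_n_e_two (by omega), smul_zero]
  have hleft : br (d (e 2)) (e 2) = t 1 • br (e 1) (e 2) + (2 * a 1 - t 1) • br (e 2) (e 2) +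
      ∑ j ∈ Icc 4 n, α j • ∑ m ∈ Icc 2 (n - 1), a m • e (j + m - 1) := by
    simp only [hde, map_add, map_smul, map_sum, LinearMap.add_apply, LinearMap.smul_apply,
      LinearMap.sum_apply, htail, T.e_n_e_two (by omega : 2 ≤ n), smul_zero, add_zero]
  have h := hd (e 2) (e 2)
  rw [hleft, T.bracket_derivation_e_two hn hde (by norm_num), T.e_e_one 2 le_rfl, he22,
    T.derivation_sum_e (by omega) hd hdy (fun k hk => by rw [mem_Icc] at hk; omega)] at h
  linear_combination (norm := module) h

lemma bracket_e_one_e_two (T : IsLeibnizTable n α θ e y br) (hn : 3 ≤ n)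
    (hd : ∀ u v, d (br u v) = br (d u) v + br u (d v))
    (hdy : d (y 1) = ∑ k ∈ Icc 1 (n - 1), a k • y k)
    (hde : d (e 2) = t 1 • e 1 + (2 * a 1 - t 1) • e 2 + ∑ k ∈ Icc 2 (n - 2), a k • e (k + 1) +
      t n • e n) :
    ∑ k ∈ Icc 4 (n - 1), (2 * ((k : K) - 1) * a 1 * α k) • e k +
        (2 * ((n : K) - 1) * a 1 * θ) • e n =
      (4 * a 1 - t 1) • br (e 1) (e 2) + t 1 • e 3 := by
  have hleft : br (d (e 1)) (e 2) = (2 * a 1) • br (e 1) (e 2) +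
      ∑ j ∈ Icc 4 (n - 1), α j • ∑ m ∈ Icc 2 (n - 1), a m • e (j + m - 1) := by
    simp only [T.derivation_e_one (by omega) hd hdy, map_add, map_smul, map_sum,
      LinearMap.add_apply, LinearMap.smul_apply, LinearMap.sum_apply, T.sum_bracket_e_two]
    rw [sum_Icc_eq_sum_Icc_of_eq_zero (q' := n - 1) (by omega) fun j hj hj' => by
      rw [T.sum_smul_e_eq_zero_of_le a le_rfl (by omega), smul_zero]]
  have h := hd (e 1) (e 2)
  rw [hleft, T.bracket_derivation_e_two hn hde le_rfl, T.e_one_e_one, T.e_one_e_two, map_add,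
    T.derivation_sum_e (by omega) hd hdy (fun k hk => by rw [mem_Icc] at hk; omega), map_smul,
    T.derivation_e (by omega) hd hdy (i := n) (by omega),
    T.sum_smul_e_eq_zero_of_le a le_rfl le_rfl] at h
  rw [T.e_one_e_two]
  linear_combination (norm := module) h

lemma derivation_e_two_coeff_one_eq_zero [CharZero K] (T : IsLeibnizTable n α θ e y br) (hn : 3 ≤ n)
    (hd : ∀ u v, d (br u v) = br (d u) v + br u (d v))
    (hdy : d (y 1) = ∑ k ∈ Icc 1 (n - 1), a k • y k)
    (hde : d (e 2) = t 1 • e 1 + (2 * a 1 - t 1) • e 2 + ∑ k ∈ Icc 2 (n - 2), a k • e (k + 1) +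
      t n • e n) (hE : HasCoordinateFunctionals K e n) : t 1 = 0 := by
  obtain ⟨φ, hφ⟩ := hE 3 (by norm_num) hn
  have h22 := congrArg φ (T.bracket_e_two_e_two hn hd hdy hde)
  have h12 := congrArg φ (T.bracket_e_one_e_two hn hd hdy hde)
  rw [T.e_one_e_two] at h22 h12
  rcases eq_or_ne n 3 with rfl | hn3
  · -- for `n = 3` the vector `e 3 = e n` also occurs in `[e 1, e 2]`; both identities are needed
    replace h22 : 0 = t 1 * θ + t 1 := by simpa [hφ] using h22
    replace h12 : 2 * (3 - 1) * a 1 * θ = (4 * a 1 - t 1) * θ + t 1 := by simpa [hφ] using h12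
    linear_combination (-1 / 2 : K) * h22 + (-1 / 2 : K) * h12
  · simpa [hφ, hn3] using h22.symm

lemma alpha_mul_eq_zero [CharZero K] (T : IsLeibnizTable n α θ e y br) (hn : 3 ≤ n)
    (hd : ∀ u v, d (br u v) = br (d u) v + br u (d v))
    (hdy : d (y 1) = ∑ k ∈ Icc 1 (n - 1), a k • y k)
    (hde : d (e 2) = t 1 • e 1 + (2 * a 1 - t 1) • e 2 + ∑ k ∈ Icc 2 (n - 2), a k • e (k + 1) +
      t n • e n) (ht : t 1 = 0) (hE : HasCoordinateFunctionals K e n) {i : ℕ} (hi : 4 ≤ i)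
    (hin : i ≤ n) : α i * a 1 = 0 := by
  obtain ⟨φ, hφ⟩ := hE i (by omega) hin
  have h : 2 * ((i : K) - 1) * a 1 * α i = 2 * (2 * a 1) * α i := by
    simpa [hφ, ht, hi, hin, -mul_eq_mul_right_iff]
      using congrArg φ (T.bracket_e_two_e_two hn hd hdy hde)
  have hi3 : (i : K) - 3 ≠ 0 := sub_ne_zero.2 (by exact_mod_cast (show i ≠ 3 by omega))
  have h' : ((i : K) - 3) * (α i * a 1) = 0 := by linear_combination h / 2
  exact (mul_eq_zero.1 h').resolve_left hi3

lemma theta_mul_eq_zero [CharZero K] (T : IsLeibnizTable n α θ e y br) (hn : 3 ≤ n)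
    (hd : ∀ u v, d (br u v) = br (d u) v + br u (d v))
    (hdy : d (y 1) = ∑ k ∈ Icc 1 (n - 1), a k • y k)
    (hde : d (e 2) = t 1 • e 1 + (2 * a 1 - t 1) • e 2 + ∑ k ∈ Icc 2 (n - 2), a k • e (k + 1) +
      t n • e n) (ht : t 1 = 0) (hE : HasCoordinateFunctionals K e n) :
    ((n : K) - 3) * θ * a 1 = 0 := by
  rcases hn.eq_or_lt with rfl | hn4
  · simp
  obtain ⟨φ, hφ⟩ := hE n (by omega) le_rfl
  have h := T.bracket_e_one_e_two hn hd hdy hde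
  rw [T.e_one_e_two] at h
  replace h : 2 * ((n : K) - 1) * a 1 * θ = 4 * a 1 * θ := by
    simpa [hφ, ht, show ¬n ≤ n - 1 by omega, -mul_eq_mul_right_iff] using congrArg φ h
  linear_combination h / 2

end IsLeibnizTable

end LeibnizTable

/-- Description of the even derivations of the Leibniz superalgebra
L(α₄,…,α_n,θ) with multiplication table (1) of the paper. -/
theorem statement7 {V : Type*} [AddCommGroup V] [Module ℂ V]
    (n : ℕ) (hn : 3 ≤ n) (α : ℕ → ℂ) (θ : ℂ)
    (bas : Module.Basis (Fin n ⊕ Fin (n - 1)) ℂ V)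
    (eN yN : ℕ → V)
    (heN : ∀ k (h : 1 ≤ k ∧ k ≤ n), eN k = bas (Sum.inl ⟨k - 1, by omega⟩))
    (heN0 : ∀ k, ¬(1 ≤ k ∧ k ≤ n) → eN k = 0)
    (hyN : ∀ k (h : 1 ≤ k ∧ k ≤ n - 1), yN k = bas (Sum.inr ⟨k - 1, by omega⟩))
    (hyN0 : ∀ k, ¬(1 ≤ k ∧ k ≤ n - 1) → yN k = 0)
    (br : V →ₗ[ℂ] V →ₗ[ℂ] V)
    -- multiplication table (1):
    (hee1 : ∀ i, 1 ≤ i → i ≤ n → br (eN i) (eN 1) = if i = 1 then eN 3 else eN (i + 1))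
    (hee2a : br (eN 1) (eN 2) = (∑ k ∈ Finset.Icc 4 (n - 1), α k • eN k) + θ • eN n)
    (hee2b : ∀ i, 2 ≤ i → i ≤ n →
      br (eN i) (eN 2) = ∑ k ∈ Finset.Icc 4 n, α k • eN (i + k - 2))
    (hee0 : ∀ i j, 1 ≤ i → i ≤ n → 3 ≤ j → j ≤ n → br (eN i) (eN j) = 0)
    (hye1 : ∀ j, 1 ≤ j → j ≤ n - 1 → br (yN j) (eN 1) = yN (j + 1))
    (hye0 : ∀ j i, 1 ≤ j → j ≤ n - 1 → 3 ≤ i → i ≤ n → br (yN j) (eN i) = 0)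
    (hey1 : ∀ i, 1 ≤ i → i ≤ n →
      br (eN i) (yN 1) = if i = 1 then (1 / 2 : ℂ) • yN 2 else (1 / 2 : ℂ) • yN i)
    (hey0 : ∀ i j, 1 ≤ i → i ≤ n → 2 ≤ j → j ≤ n - 1 → br (eN i) (yN j) = 0)
    (hyy1 : ∀ j, 1 ≤ j → j ≤ n - 1 →
      br (yN j) (yN 1) = if j = 1 then eN 1 else eN (j + 1))
    (hyy0 : ∀ j k, 1 ≤ j → j ≤ n - 1 → 2 ≤ k → k ≤ n - 1 → br (yN j) (yN k) = 0)
    -- d is an even derivation: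
    (d : Module.End ℂ V)
    (hdE : ∀ x ∈ Submodule.span ℂ (Set.range fun i : Fin n => bas (Sum.inl i)),
      d x ∈ Submodule.span ℂ (Set.range fun i : Fin n => bas (Sum.inl i)))
    (hdY : ∀ x ∈ Submodule.span ℂ (Set.range fun j : Fin (n - 1) => bas (Sum.inr j)),
      d x ∈ Submodule.span ℂ (Set.range fun j : Fin (n - 1) => bas (Sum.inr j)))
    (hder : ∀ u v : V, d (br u v) = br (d u) v + br u (d v)) :
    ∃ (a : ℕ → ℂ) (bn : ℂ),
      d (eN 1) = (2 * a 1) • eN 1 + ∑ k ∈ Finset.Icc 2 (n - 1), a k • eN (k + 1) ∧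
      d (eN 2) = (2 * a 1) • eN 2 + (∑ k ∈ Finset.Icc 2 (n - 2), a k • eN (k + 1)) +
        bn • eN n ∧
      (∀ i, 3 ≤ i → i ≤ n → d (eN i) =
        (2 * ((i : ℂ) - 1) * a 1) • eN i +
          ∑ k ∈ Finset.Icc 2 (n - i + 1), a k • eN (i + k - 1)) ∧
      (∀ i, 1 ≤ i → i ≤ n - 1 → d (yN i) =
        ((2 * (i : ℂ) - 1) * a 1) • yN i +
          ∑ k ∈ Finset.Icc 2 (n - i), a k • yN (i + k - 1)) ∧
      ((n : ℂ) - 3) * θ * a 1 = 0 ∧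
      (∀ i, 4 ≤ i → i ≤ n → α i * a 1 = 0) := by
  have T : IsLeibnizTable n α θ eN yN br :=
    .of_bounded (by omega) heN0 hyN0 hee1 hee2a hee2b hee0 hye1 hye0 hey1 hey0 hyy1 hyy0
  have hE : HasCoordinateFunctionals ℂ eN n :=
    bas.hasCoordinateFunctionals Sum.inl_injective heN heN0
  have hY : HasCoordinateFunctionals ℂ yN (n - 1) :=
    bas.hasCoordinateFunctionals Sum.inr_injective hyN hyN0
  obtain ⟨a, hdy⟩ := exists_eq_sum_Icc_of_mem_span (v := fun j => bas (Sum.inr j)) hyN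
    (hdY _ (Submodule.subset_span ⟨⟨0, by omega⟩, (hyN 1 (by omega)).symm⟩))
  obtain ⟨t, hde⟩ := exists_eq_sum_Icc_of_mem_span (v := fun i => bas (Sum.inl i)) heN
    (hdE _ (Submodule.subset_span ⟨⟨1, by omega⟩, (heN 2 (by omega)).symm⟩))
  have hde2 := T.derivation_e_two hn hder hdy hde hY
  have ht := T.derivation_e_two_coeff_one_eq_zero hn hder hdy hde2 hE
  refine ⟨a, t n, T.derivation_e_one (by omega) hder hdy, ?_, fun i hi hin => ?_,
    fun i hi hin => ?_, T.theta_mul_eq_zero hn hder hdy hde2 ht hE,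
    fun i => T.alpha_mul_eq_zero hn hder hdy hde2 ht hE⟩
  · rw [hde2, ht, zero_smul, zero_add, sub_zero]
  · rw [T.derivation_e (by omega) hder hdy hi,
      sum_Icc_eq_sum_Icc_of_eq_zero (q' := n - i + 1) (by omega)
      fun k hk _ => by rw [T.e_eq_zero _ (by omega), smul_zero]]
  · rw [T.derivation_y (by omega) hder hdy hi,
      sum_Icc_eq_sum_Icc_of_eq_zero (q' := n - i) (by omega)
      fun k hk _ => by rw [T.y_eq_zero _ (by omega), smul_zero]]
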